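/- Let g ∈ SL(n, ℝ) have Iwasawa decomposition g = n·a·k with n unit upper triangular, a = diag(y₁/y₀, …, y_n/y_{n−1}) (y₀ = y_n = 1, y_i > 0), k ∈ SO(n). Then for each j ∈ {1,…,n−1}, y_j equals the inverse of the Euclidean norm of the vector of all order-(n−j) anti-leading minors of g: y_j = ( Σ_σ ( g(j+1,…,n | σ(1),…,σ(n−j)) )² )^{−1/2}, where σ ranges over (n−j)-element subsets of {1,…,n} in increasing order. -/

import Mathlib

/-!
Let `M` be the last `n - j` rows of `g = N A K`. By the Cauchy–Binet formula the sum of the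
squared maximal minors of `M` is the Gram determinant `det (M Mᵀ)`. As `K` is orthogonal,
`M Mᵀ = P Pᵀ` with `P` the last `n - j` rows of the upper triangular matrix `N A`. These rows
vanish in the first `j` columns, so `det (P Pᵀ) = (det T)²` for the lower right block `T` of
`N A`, and `det T = ∏_{i ≥ j} y_{i+1} / y_i = y_n / y_j = 1 / y_j`.
-/

open Matrix Finset Equiv

theorem sum_injective_eq_sum_strictMono_sum_perm {m : ℕ} {α β : Type*} [Fintype α]
    [LinearOrder α] [AddCommMonoid β] (F : (Fin m → α) → β) :
    ∑ f with Function.Injective f, F f =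
      ∑ σ with StrictMono σ, ∑ π : Perm (Fin m), F (σ ∘ π) := by
  rw [← sum_product']
  symm
  refine sum_bij (fun p _ => p.1 ∘ p.2) ?_ ?_ ?_ (fun _ _ => rfl)
  · simp only [mem_product, mem_filter, mem_univ, true_and, and_true]
    exact fun p hp => hp.injective.comp p.2.injective
  · simp only [mem_product, mem_filter, mem_univ, true_and, and_true]
    rintro ⟨σ₁, π₁⟩ hσ₁ ⟨σ₂, π₂⟩ hσ₂ (h : σ₁ ∘ π₁ = σ₂ ∘ π₂)
    -- both `σᵢ` are the monotone rearrangement of the same tuple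
    have hσ : σ₁ = σ₂ := calc
      σ₁ = (σ₁ ∘ π₁) ∘ ⇑π₁⁻¹ := by ext; simp
      _ = (σ₁ ∘ π₁) ∘ ⇑π₂⁻¹ := Tuple.unique_monotone
        (by simpa [Function.comp_assoc] using hσ₁.monotone)
        (by simpa [h, Function.comp_assoc] using hσ₂.monotone)
      _ = σ₂ := by rw [h]; ext; simp
    subst hσ
    exact Prod.ext rfl (Equiv.ext fun i => hσ₁.injective (congrFun h i))
  · simp only [mem_product, mem_filter, mem_univ, true_and, and_true]
    intro f hf
    refine ⟨(f ∘ Tuple.sort f, (Tuple.sort f)⁻¹),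
      (Tuple.monotone_sort f).strictMono_of_injective (hf.comp (Tuple.sort f).injective), ?_⟩
    ext i
    simp

namespace Matrix

variable {R : Type*} [CommRing R]

section

variable {m : ℕ} {α : Type*} [Fintype α]

theorem det_mul_eq_sum_det_submatrix_mul_prod (M : Matrix (Fin m) α R)
    (N : Matrix α (Fin m) R) :
    (M * N).det = ∑ f : Fin m → α, (M.submatrix id f).det * ∏ i, N (f i) i := by
  calc (M * N).det
      = ∑ τ : Perm (Fin m), ∑ f : Fin m → α,
          Perm.sign τ * ∏ i, M (τ i) (f i) * N (f i) i := by
        simp only [det_apply', mul_apply, Fintype.prod_sum, mul_sum]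
    _ = ∑ f : Fin m → α, ∑ τ : Perm (Fin m),
          Perm.sign τ * ∏ i, M (τ i) (f i) * N (f i) i := sum_comm
    _ = ∑ f : Fin m → α, (M.submatrix id f).det * ∏ i, N (f i) i := by
        simp only [det_apply', submatrix_apply, id_eq, sum_mul, prod_mul_distrib, mul_assoc]

theorem det_mul_eq_sum_strictMono [LinearOrder α] (M : Matrix (Fin m) α R)
    (N : Matrix α (Fin m) R) :
    (M * N).det = ∑ σ with StrictMono σ, (M.submatrix id σ).det * (N.submatrix σ id).det := by
  have hzero : ∀ f : Fin m → α, ¬ Function.Injective f →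
      (M.submatrix id f).det * ∏ i, N (f i) i = 0 := by
    intro f hf
    obtain ⟨a, b, hab, hne⟩ : ∃ a b, f a = f b ∧ a ≠ b := by
      simpa [Function.Injective] using hf
    rw [det_zero_of_column_eq hne (fun i => by simp [hab]), zero_mul]
  rw [det_mul_eq_sum_det_submatrix_mul_prod, ← sum_filter_of_ne (p := Function.Injective)
    (fun f _ h => by_contra fun hf => h (hzero f hf)), sum_injective_eq_sum_strictMono_sum_perm]
  refine sum_congr rfl fun σ _ => ?_
  have hperm : ∀ π : Perm (Fin m),
      (M.submatrix id (σ ∘ π)).det = Perm.sign π * (M.submatrix id σ).det := fun π =>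
    det_permute' π (M.submatrix id σ)
  simp only [hperm, det_apply' (N.submatrix σ id), submatrix_apply, id_eq, mul_sum,
    Function.comp_apply]
  exact sum_congr rfl fun π _ => by ring

theorem det_mul_transpose_eq_sum_sq [LinearOrder α] (M : Matrix (Fin m) α R) :
    (M * Mᵀ).det = ∑ σ with StrictMono σ, (M.submatrix id σ).det ^ 2 := by
  rw [det_mul_eq_sum_strictMono]
  refine sum_congr rfl fun σ _ => ?_
  rw [sq, ← det_transpose (Mᵀ.submatrix σ id)]
  rfl

end

theorem mul_eq_submatrix_mul_submatrix {ι κ α β : Type*} [Fintype α] [Fintype β]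
    (P : Matrix ι α R) (Q : Matrix α κ R) {e : β → α} (he : Function.Injective e)
    (hP : ∀ i, ∀ c ∉ Set.range e, P i c = 0) :
    P * Q = P.submatrix id e * Q.submatrix e id := by
  ext i k
  exact (Fintype.sum_of_injective e he _ _ (fun c hc => by simp [hP i c hc]) fun _ => rfl).symm

theorem IsUpperTriangular.submatrix_of_strictMono {m n : Type*} [LinearOrder m] [LinearOrder n]
    {B : Matrix n n R} (hB : B.IsUpperTriangular) {r : m → n} (hr : StrictMono r) :
    (B.submatrix r r).IsUpperTriangular :=
  fun _ _ h => hB (hr h)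

theorem IsUpperTriangular.det_submatrix_mul_transpose {m n : Type*} [Fintype m] [Fintype n]
    [LinearOrder m] [LinearOrder n] {B : Matrix n n R} (hB : B.IsUpperTriangular)
    {r : m → n} (hr : StrictMono r) (hup : IsUpperSet (Set.range r)) :
    (B.submatrix r id * (B.submatrix r id)ᵀ).det = ∏ i, B (r i) (r i) ^ 2 := by
  have hzero : ∀ i, ∀ c ∉ Set.range r, B.submatrix r id i c = 0 := fun i c hc =>
    hB (lt_of_not_ge fun h => hc (hup h ⟨i, rfl⟩))
  rw [mul_eq_submatrix_mul_submatrix _ _ hr.injective hzero, submatrix_submatrix,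
    ← transpose_submatrix, submatrix_submatrix, Function.id_comp, Function.comp_id, det_mul,
    det_transpose, det_of_isUpperTriangular (hB.submatrix_of_strictMono hr), ← sq, ← prod_pow]
  rfl

theorem det_submatrix_mul_transpose_of_iwasawa {m n : Type*} [Fintype m] [Fintype n]
    [LinearOrder m] [LinearOrder n] {N A K : Matrix n n R} (hN : N.IsUpperTriangular)
    (hNd : ∀ i, N i i = 1) (hA : A.IsDiag) (hK : K * Kᵀ = 1) {r : m → n} (hr : StrictMono r)
    (hup : IsUpperSet (Set.range r)) :
    ((N * A * K).submatrix r id * ((N * A * K).submatrix r id)ᵀ).det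
      = ∏ i, A (r i) (r i) ^ 2 := by
  rw [← hA.diagonal_diag]
  have hNA : (N * diagonal A.diag).IsUpperTriangular := hN.mul (blockTriangular_diagonal _)
  rw [submatrix_mul _ _ _ _ _ Function.bijective_id, submatrix_id_id, transpose_mul,
    Matrix.mul_assoc, ← Matrix.mul_assoc K, hK, Matrix.one_mul,
    hNA.det_submatrix_mul_transpose hr hup]
  simp [hNd]

end Matrix

theorem Finset.eq_prod_range_div₀ {G : Type*} [CommGroupWithZero G] (f : ℕ → G) {n : ℕ}
    (hf : ∀ i < n, f i ≠ 0) : f n = f 0 * ∏ i ∈ range n, f (i + 1) / f i := by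
  induction n with
  | zero => simp
  | succ n ih =>
    rw [prod_range_succ, ← mul_assoc, ← ih fun i hi => hf i (by omega)]
    exact (mul_div_cancel₀ _ (hf n (by omega))).symm

abbrev antiLeadingRows (n j : ℕ) : Fin (n - j) → Fin n := fun i => ⟨j + i.1, by omega⟩

theorem strictMono_antiLeadingRows (n j : ℕ) : StrictMono (antiLeadingRows n j) :=
  fun _ _ h => Nat.add_lt_add_left h j

theorem isUpperSet_range_antiLeadingRows (n j : ℕ) :
    IsUpperSet (Set.range (antiLeadingRows n j)) := by
  rintro _ d hid ⟨i, rfl⟩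
  have : j + i.1 ≤ d := hid
  exact ⟨⟨d - j, by omega⟩, Fin.ext (show j + (d - j) = d by omega)⟩

/-- For `g ∈ SL(n, ℝ)` with Iwasawa decomposition `g = n·a·k`, the dilaton `y_j` is the
inverse of the Euclidean norm of the vector of all anti-leading minors of `g` of order
`n - j` (the generalized Plücker coordinates). -/
theorem stmt_16 (n : ℕ) (g N A K : Matrix (Fin n) (Fin n) ℝ)
    (hdec : g = N * A * K)
    (hNd : ∀ i, N i i = 1) (hN0 : ∀ i j : Fin n, j < i → N i j = 0)
    (y : ℕ → ℝ) (hyn : y n = 1) (hypos : ∀ i, i ≤ n → 0 < y i)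
    (hA : ∀ i j : Fin n, i ≠ j → A i j = 0)
    (hAy : ∀ i : Fin n, A i i = y (i.1 + 1) / y i.1)
    (hK : K * K.transpose = 1) :
    ∀ j : ℕ, (hj1 : 1 ≤ j) → (hj2 : j ≤ n - 1) →
      y j =
        (Real.sqrt (∑ σ ∈ Finset.univ.filter
            (fun σ : Fin (n - j) → Fin n => ∀ a b : Fin (n - j), a < b → σ a < σ b),
          ((g.submatrix (fun i : Fin (n - j) => (⟨j + i.1, by have := i.2; omega⟩ : Fin n))
              σ).det) ^ 2))⁻¹ := by
  intro j _ hj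
  have hyj : 0 < y j := hypos j (by omega)
  have htel : ∏ i ∈ range (n - j), y (j + i + 1) / y (j + i) = (y j)⁻¹ := by
    refine eq_inv_of_mul_eq_one_right ?_
    have := Finset.eq_prod_range_div₀ (fun k => y (j + k)) (n := n - j)
      fun k hk => (hypos _ (by omega)).ne'
    simpa only [Nat.add_sub_cancel' (by omega : j ≤ n), hyn, add_zero, add_assoc] using this.symm
  have hminors : ∑ σ with StrictMono σ, (g.submatrix (antiLeadingRows n j) σ).det ^ 2
      = (y j)⁻¹ ^ 2 := calc
    _ = (g.submatrix (antiLeadingRows n j) id * (g.submatrix (antiLeadingRows n j) id)ᵀ).det :=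
        (det_mul_transpose_eq_sum_sq _).symm
    _ = ∏ i, A (antiLeadingRows n j i) (antiLeadingRows n j i) ^ 2 := by
        rw [hdec]
        exact det_submatrix_mul_transpose_of_iwasawa (fun i k h => hN0 i k h) hNd hA hK
          (strictMono_antiLeadingRows n j) (isUpperSet_range_antiLeadingRows n j)
    _ = (y j)⁻¹ ^ 2 := by
        simp only [hAy, prod_pow, ← htel]
        exact congrArg (· ^ 2)
          (Fin.prod_univ_eq_prod_range (fun k => y (j + k + 1) / y (j + k)) _)
  have hmono (σ : Fin (n - j) → Fin n) : (∀ a b, a < b → σ a < σ b) ↔ StrictMono σ := Iff.rfl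
  simp only [hmono]
  rw [hminors, Real.sqrt_sq (inv_nonneg.mpr hyj.le), inv_inv]
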